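/- Let S ⊆ ℤ^r be finite and nonempty with a_s ∈ K[n]\{0} for s ∈ S, and suppose S is contained in a proper affine subspace of ℚ^r: there exist v = (v_1,…,v_r) ∈ ℤ^r \ {0} and c ∈ ℤ such that ⟨v, s⟩ = c for all s ∈ S. Let p := v_1 n_1 + ⋯ + v_r n_r ∈ K[n] (a nonzero polynomial). Then for every α ∈ ℤ, a rational function y ∈ K(n) satisfies the homogeneous PLDE ∑_{s∈S} a_s N^s y = 0 if and only if y · p^α satisfies it. In particular, if the homogeneous equation has a nonzero rational solution, it has one whose denominator is not divisible by p. -/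

import Mathlib

/-!
Shifting by `s` maps the linear form `p = ∑ v_j n_j` to `p + ⟨v, s⟩`, so on a support lying in
the hyperplane `⟨v, s⟩ = c` every `N^s` sends `p^α` to the same factor `(p + c)^α`, which
therefore comes out of the operator `∑ a_s N^s` as a nonzero multiplier. Multiplying a solution
by the exact power of `p` dividing its reduced denominator then removes `p` from the denominator.
-/

open MvPolynomial

/-- The substitution homomorphism `n_j ↦ n_j + i_j` on `K[n₁,…,n_r]`. -/
noncomputable def mShiftHom (K : Type*) [Field K] {r : ℕ} (i : Fin r → ℤ) :
    MvPolynomial (Fin r) K →ₐ[K] MvPolynomial (Fin r) K :=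
  aeval (fun j => X j + C (i j : K))

/-- The shift automorphism `N^i` of `K[n₁,…,n_r]`, determined by `n_j ↦ n_j + i_j`. -/
noncomputable def mShift (K : Type*) [Field K] {r : ℕ} (i : Fin r → ℤ) :
    MvPolynomial (Fin r) K ≃ₐ[K] MvPolynomial (Fin r) K :=
  AlgEquiv.ofAlgHom (mShiftHom K i) (mShiftHom K (-i))
    (by apply MvPolynomial.algHom_ext; intro j; simp [mShiftHom])
    (by apply MvPolynomial.algHom_ext; intro j; simp [mShiftHom])

/-- `Spread(p,q) = { i ∈ ℤ^r : gcd(p, N^i q) ≠ 1 }`, where `gcd ≠ 1` (not a unit)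
is expressed as `¬ IsRelPrime`. -/
def mSpread {K : Type*} [Field K] {r : ℕ} (p q : MvPolynomial (Fin r) K) :
    Set (Fin r → ℤ) :=
  {i | ¬ IsRelPrime p (mShift K i q)}

/-- The canonical embedding of `K[n₁,…,n_r]` into its fraction field `K(n₁,…,n_r)`. -/
noncomputable def toFrac (K : Type*) [Field K] {r : ℕ} :
    MvPolynomial (Fin r) K →+* FractionRing (MvPolynomial (Fin r) K) :=
  algebraMap _ _

/-- The shift automorphism `N^i` extended to the fraction field `K(n₁,…,n_r)`. -/
noncomputable def fShift (K : Type*) [Field K] {r : ℕ} (i : Fin r → ℤ) :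
    FractionRing (MvPolynomial (Fin r) K) ≃+* FractionRing (MvPolynomial (Fin r) K) :=
  IsFractionRing.ringEquivOfRingEquiv (mShift K i).toRingEquiv

namespace IsFractionRing

variable {A : Type*} [CommRing A] [IsDomain A] [UniqueFactorizationMonoid A]
  {L : Type*} [Field L] [Algebra A L] [IsFractionRing A L]

theorem exists_mul_pow_eq_reduced_fraction_not_dvd_den {p : A} (hp : ¬IsUnit p) (y : L) :
    ∃ (m : ℕ) (num den : A), den ≠ 0 ∧ IsRelPrime num den ∧
      y * algebraMap A L p ^ m = algebraMap A L num / algebraMap A L den ∧ ¬p ∣ den := by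
  obtain ⟨num, b, hcop, rfl⟩ := exists_reduced_fraction A y
  have hb : (b : A) ≠ 0 := nonZeroDivisors.coe_ne_zero b
  obtain ⟨m, den, hndvd, hb_eq⟩ := WfDvdMonoid.max_power_factor' hb hp
  have hpm : p ^ m ≠ 0 := left_ne_zero_of_mul (hb_eq ▸ hb)
  have hden : den ≠ 0 := right_ne_zero_of_mul (hb_eq ▸ hb)
  refine ⟨m, num, den, hden, hcop.of_dvd_right ⟨p ^ m, by rw [hb_eq, mul_comm]⟩, ?_, hndvd⟩
  rw [mk'_eq_div, hb_eq, ← map_pow, map_mul, div_mul_eq_div_div_swap,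
    div_mul_cancel₀ _ ((map_ne_zero_iff _ (IsFractionRing.injective A L)).mpr hpm)]

end IsFractionRing

noncomputable def linearForm (K : Type*) [Field K] {r : ℕ} (v : Fin r → ℤ) :
    MvPolynomial (Fin r) K :=
  ∑ j, C (v j : K) * X j

section LinearForm

variable {K : Type*} [Field K] {r : ℕ}

theorem coeff_single_linearForm (v : Fin r → ℤ) (j : Fin r) :
    coeff (Finsupp.single j 1) (linearForm K v) = v j := by
  rw [linearForm, coeff_sum, Finset.sum_eq_single j]
  · rw [coeff_C_mul, coeff_X, if_pos rfl, mul_one]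
  · intro i _ hij
    rw [coeff_C_mul, coeff_X, if_neg, mul_zero]
    exact fun h => hij (Finsupp.single_left_injective one_ne_zero h)
  · simp

theorem constantCoeff_linearForm (v : Fin r → ℤ) : constantCoeff (linearForm K v) = 0 := by
  simp [linearForm]

theorem not_isUnit_linearForm (v : Fin r → ℤ) : ¬IsUnit (linearForm K v) := fun h => by
  simpa [constantCoeff_linearForm] using h.map constantCoeff

theorem linearForm_add_C_ne_zero [CharZero K] {v : Fin r → ℤ} (hv : v ≠ 0) (k : K) :
    linearForm K v + C k ≠ 0 := by
  obtain ⟨j, hj⟩ := Function.ne_iff.mp hv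
  intro h
  have := congrArg (coeff (Finsupp.single j 1)) h
  rw [coeff_add, coeff_single_linearForm, coeff_C,
    if_neg (Finsupp.single_ne_zero.mpr one_ne_zero).symm, add_zero, coeff_zero] at this
  exact hj (by exact_mod_cast this)

theorem linearForm_ne_zero [CharZero K] {v : Fin r → ℤ} (hv : v ≠ 0) : linearForm K v ≠ 0 := by
  simpa using linearForm_add_C_ne_zero hv (0 : K)

theorem mShift_linearForm (s v : Fin r → ℤ) :
    mShift K s (linearForm K v) = linearForm K v + C ((∑ j, v j * s j : ℤ) : K) := by
  simp [mShift, mShiftHom, linearForm, mul_add, Finset.sum_add_distrib]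

end LinearForm

section Operator

variable {K : Type*} [Field K] {r : ℕ}

theorem toFrac_ne_zero {q : MvPolynomial (Fin r) K} (hq : q ≠ 0) : toFrac K q ≠ 0 :=
  (map_ne_zero_iff _ (IsFractionRing.injective _ _)).mpr hq

theorem fShift_toFrac (i : Fin r → ℤ) (q : MvPolynomial (Fin r) K) :
    fShift K i (toFrac K q) = toFrac K (mShift K i q) :=
  IsFractionRing.ringEquivOfRingEquiv_algebraMap _ _

noncomputable def linDiffOp (S : Finset (Fin r → ℤ)) (a : (Fin r → ℤ) → MvPolynomial (Fin r) K)
    (y : FractionRing (MvPolynomial (Fin r) K)) : FractionRing (MvPolynomial (Fin r) K) :=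
  ∑ s ∈ S, toFrac K (a s) * fShift K s y

theorem fShift_mul_zpow_linearForm {s v : Fin r → ℤ} {c : ℤ} (hs : ∑ j, v j * s j = c) (α : ℤ)
    (y : FractionRing (MvPolynomial (Fin r) K)) :
    fShift K s (y * toFrac K (linearForm K v) ^ α) =
      fShift K s y * toFrac K (linearForm K v + C (c : K)) ^ α := by
  rw [map_mul, map_zpow₀, fShift_toFrac, mShift_linearForm, hs]

theorem linDiffOp_mul_zpow_linearForm {S : Finset (Fin r → ℤ)}
    (a : (Fin r → ℤ) → MvPolynomial (Fin r) K) {v : Fin r → ℤ} {c : ℤ}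
    (hplane : ∀ s ∈ S, ∑ j, v j * s j = c) (α : ℤ) (y : FractionRing (MvPolynomial (Fin r) K)) :
    linDiffOp S a (y * toFrac K (linearForm K v) ^ α) =
      linDiffOp S a y * toFrac K (linearForm K v + C (c : K)) ^ α := by
  rw [linDiffOp, linDiffOp, Finset.sum_mul]
  refine Finset.sum_congr rfl fun s hs => ?_
  rw [fShift_mul_zpow_linearForm (hplane s hs), mul_assoc]

theorem linDiffOp_mul_zpow_linearForm_eq_zero_iff [CharZero K] {S : Finset (Fin r → ℤ)}
    (a : (Fin r → ℤ) → MvPolynomial (Fin r) K) {v : Fin r → ℤ} (hv : v ≠ 0) {c : ℤ}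
    (hplane : ∀ s ∈ S, ∑ j, v j * s j = c) (α : ℤ) (y : FractionRing (MvPolynomial (Fin r) K)) :
    linDiffOp S a (y * toFrac K (linearForm K v) ^ α) = 0 ↔ linDiffOp S a y = 0 := by
  rw [linDiffOp_mul_zpow_linearForm a hplane,
    mul_eq_zero_iff_right (zpow_ne_zero _ (toFrac_ne_zero (linearForm_add_C_ne_zero hv _)))]

end Operator

theorem periodic_factor_of_degenerate_support_general
    {K : Type*} [Field K] [CharZero K] {r : ℕ}
    (S : Finset (Fin r → ℤ))
    (a : (Fin r → ℤ) → MvPolynomial (Fin r) K)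
    (v : Fin r → ℤ) (hv : v ≠ 0) (c : ℤ)
    (hplane : ∀ s ∈ S, ∑ j, v j * s j = c) :
    (∀ (α : ℤ) (y : FractionRing (MvPolynomial (Fin r) K)),
      (∑ s ∈ S, toFrac K (a s) * fShift K s y = 0) ↔
      (∑ s ∈ S, toFrac K (a s) *
          fShift K s (y * (toFrac K (∑ j, C (v j : K) * X j)) ^ α) = 0))
    ∧ ((∃ y : FractionRing (MvPolynomial (Fin r) K), y ≠ 0 ∧
          ∑ s ∈ S, toFrac K (a s) * fShift K s y = 0) →
        ∃ (y : FractionRing (MvPolynomial (Fin r) K))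
          (pnum den : MvPolynomial (Fin r) K),
          y ≠ 0 ∧ (∑ s ∈ S, toFrac K (a s) * fShift K s y = 0) ∧
          den ≠ 0 ∧ IsRelPrime pnum den ∧ y = toFrac K pnum / toFrac K den ∧
          ¬ (∑ j, C (v j : K) * X j) ∣ den) := by
  have hsol (α : ℤ) (y) :
      linDiffOp S a y = 0 ↔ linDiffOp S a (y * toFrac K (linearForm K v) ^ α) = 0 :=
    (linDiffOp_mul_zpow_linearForm_eq_zero_iff a hv hplane α y).symm
  refine ⟨hsol, ?_⟩
  rintro ⟨y, hy, hy_sol⟩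
  obtain ⟨m, num, den, hden, hcop, hy_eq, hndvd⟩ :=
    IsFractionRing.exists_mul_pow_eq_reduced_fraction_not_dvd_den
      (not_isUnit_linearForm (K := K) v) y
  exact ⟨y * toFrac K (linearForm K v) ^ (m : ℤ), num, den,
    mul_ne_zero hy (zpow_ne_zero _ (toFrac_ne_zero (linearForm_ne_zero hv))),
    (hsol m y).mp hy_sol, hden, hcop, by rwa [zpow_natCast], hndvd⟩

/-- **Degenerate supports.**  Suppose the support `S` lies in a proper affine subspace:
`⟨v, s⟩ = c` for all `s ∈ S`, for some `v ∈ ℤ^r \ {0}` and `c ∈ ℤ`.  Put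
`p := v₁n₁ + ⋯ + v_r n_r`.  Then for every `α ∈ ℤ`, `y` solves the homogeneous PLDE
`∑_{s ∈ S} a_s N^s y = 0` iff `y·p^α` does.  In particular, if the homogeneous equation
has a nonzero rational solution, then it has one whose denominator (in lowest terms)
is not divisible by `p`. -/
theorem periodic_factor_of_degenerate_support
    {K : Type*} [Field K] [CharZero K] {r : ℕ}
    (S : Finset (Fin r → ℤ)) (hS : S.Nonempty)
    (a : (Fin r → ℤ) → MvPolynomial (Fin r) K) (ha : ∀ s ∈ S, a s ≠ 0)
    (v : Fin r → ℤ) (hv : v ≠ 0) (c : ℤ)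
    (hplane : ∀ s ∈ S, ∑ j, v j * s j = c) :
    (∀ (α : ℤ) (y : FractionRing (MvPolynomial (Fin r) K)),
      (∑ s ∈ S, toFrac K (a s) * fShift K s y = 0) ↔
      (∑ s ∈ S, toFrac K (a s) *
          fShift K s (y * (toFrac K (∑ j, C (v j : K) * X j)) ^ α) = 0))
    ∧ ((∃ y : FractionRing (MvPolynomial (Fin r) K), y ≠ 0 ∧
          ∑ s ∈ S, toFrac K (a s) * fShift K s y = 0) →
        ∃ (y : FractionRing (MvPolynomial (Fin r) K))
          (pnum den : MvPolynomial (Fin r) K),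
          y ≠ 0 ∧ (∑ s ∈ S, toFrac K (a s) * fShift K s y = 0) ∧
          den ≠ 0 ∧ IsRelPrime pnum den ∧ y = toFrac K pnum / toFrac K den ∧
          ¬ (∑ j, C (v j : K) * X j) ∣ den) :=
  periodic_factor_of_degenerate_support_general S a v hv c hplane
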